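/- Let E be a finite-dimensional real vector space, π₀ : E* → E a skew-symmetric linear map, and Q : E → E a linear automorphism with Q ∘ π₀ ∘ Qᵀ = π₀, where Qᵀ : E* → E* is the transpose of Q. Let W_per = { (λ,φ) ∈ W(E) : λ(1) = Q(λ(0)) and φ(0) = Qᵀ(φ(1)) } and V_per = { (λ,φ) ∈ W_per : λ(u) = λ(0) − π₀(∫₀ᵘ φ(s) ds) for all u ∈ [0,1] }. Then the Ω-orthogonal of V_per within W_per equals the set of (λ̃, φ̃) ∈ W_per for which there exists a continuously differentiable b : [0,1] → E* with b(0) = Qᵀ(b(1)), λ̃(u) = π₀(b(u)) for all u, and φ̃(u) = −b'(u) for all u. -/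

import Mathlib

open MeasureTheory Set

/-- An element of `W(E)`: a pair `(λ, φ)` of continuous maps on `[0,1]` with values in `E`
and in the dual `E* = E →L[ℝ] ℝ` respectively. -/
structure WPair (E : Type*) [NormedAddCommGroup E] [NormedSpace ℝ E] where
  lam : ℝ → E
  phi : ℝ → E →L[ℝ] ℝ
  lam_cont : ContinuousOn lam (Icc 0 1)
  phi_cont : ContinuousOn phi (Icc 0 1)

/-- The alternating bilinear form `Ω((λ,φ),(λ',φ')) = ∫₀¹ (φ(u)(λ'(u)) − φ'(u)(λ(u))) du`. -/
noncomputable def Omega {E : Type*} [NormedAddCommGroup E] [NormedSpace ℝ E]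
    (w w' : WPair E) : ℝ :=
  ∫ u in (0:ℝ)..(1:ℝ), (w.phi u (w'.lam u) - w'.phi u (w.lam u))

/-- The `Ω`-orthogonal of a subset `A` taken within a subset `W'` of `W(E)`. -/
def orthWithin {E : Type*} [NormedAddCommGroup E] [NormedSpace ℝ E]
    (W' A : Set (WPair E)) : Set (WPair E) :=
  {w ∈ W' | ∀ a ∈ A, Omega a w = 0}

/-- The "periodic" (twisted by the monodromy `Q`) subspace `W_per` of `W(E)`. -/
def WPer {E : Type*} [NormedAddCommGroup E] [NormedSpace ℝ E]
    (Q : E ≃L[ℝ] E) : Set (WPair E) :=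
  {w | w.lam 1 = Q (w.lam 0) ∧ w.phi 0 = (w.phi 1).comp (Q : E →L[ℝ] E)}

/-- The subspace `V_per ⊆ W_per` of solutions of `λ(u) = λ(0) − π₀ ∫₀ᵘ φ`. -/
noncomputable def VPer {E : Type*} [NormedAddCommGroup E] [NormedSpace ℝ E]
    (π₀ : (E →L[ℝ] ℝ) →ₗ[ℝ] E) (Q : E ≃L[ℝ] E) : Set (WPair E) :=
  {w ∈ WPer Q | ∀ u ∈ Icc (0:ℝ) 1, w.lam u = w.lam 0 - π₀ (∫ s in (0:ℝ)..u, w.phi s)}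

/-!
If `a` solves `λₐ' = -π₀ φₐ` and `w.phi = -b'`, skew-symmetry of `π₀` turns the integrand
of `Ω(a, w)` into `(d/du) b(λₐ) + φₐ(w.lam - π₀ b)`, so `Ω(a, w)` is the boundary term
`[b(λₐ)]₀¹` plus `∫ φₐ(w.lam - π₀ b)`. For a symmetry the integral vanishes and the twisted
periodicity of `a` and `b` kills the boundary term.

Conversely, for `w` orthogonal to `V_per` take `b = -Φ` with `Φ(u) = ∫₀ᵘ φ`, `B = Φ(1)`,
and test against `(x - R(u) π₀ α, ρ(u) α) ∈ V_per`, where `R' = ρ`, `ρ(0) = ρ(1) = 0` and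
`x - Q x = R(1) π₀ α`: this gives `∫ ρ α(μ) = B(Q x)` for `μ = w.lam + π₀ Φ`. Mean-zero `ρ`
force `μ` to be constant (du Bois-Reymond), and a `ρ` of mean one then gives
`α(λ(0)) = B(Q x)` whenever `x - Q x = π₀ α`. That is exactly the annihilator condition for
the affine equations `π₀ β = λ(0)`, `β ∘ (1 - Q) = -B ∘ Q`, whose solution `β` is the
constant of integration of `b`.
-/

section Calculus

variable {F : Type*} [NormedAddCommGroup F] [NormedSpace ℝ F] [CompleteSpace F] {a b : ℝ}

theorem hasDerivWithinAt_integral_Icc {f : ℝ → F} (hf : ContinuousOn f (Icc a b)) {u : ℝ}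
    (hu : u ∈ Icc a b) :
    HasDerivWithinAt (fun t => ∫ s in a..t, f s) (f u) (Icc a b) u :=
  have : Fact (u ∈ Icc a b) := ⟨hu⟩
  intervalIntegral.integral_hasDerivWithinAt_right
    ((hf.mono (uIcc_subset_Icc (left_mem_Icc.2 (hu.1.trans hu.2)) hu)).intervalIntegrable)
    (hf.stronglyMeasurableAtFilter_nhdsWithin measurableSet_Icc u) (hf u hu)

theorem integral_eq_sub_of_hasDerivWithinAt_Icc {f f' : ℝ → F} (hab : a ≤ b)
    (hf : ∀ u ∈ Icc a b, HasDerivWithinAt f (f' u) (Icc a b) u)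
    (hf' : ContinuousOn f' (Icc a b)) :
    ∫ u in a..b, f' u = f b - f a :=
  intervalIntegral.integral_eq_sub_of_hasDerivAt_of_le hab
    (fun u hu => (hf u hu).continuousWithinAt)
    (fun u hu => (hf u (Ioo_subset_Icc_self hu)).hasDerivAt (Icc_mem_nhds hu.1 hu.2))
    (hf'.intervalIntegrable_of_Icc hab)

end Calculus

theorem eqOn_zero_of_integral_eq_zero_of_nonneg {g : ℝ → ℝ} {a b : ℝ} (hab : a ≤ b)
    (hg : ContinuousOn g (Icc a b)) (hg_nonneg : ∀ u ∈ Icc a b, 0 ≤ g u)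
    (hg_int : ∫ u in a..b, g u = 0) :
    EqOn g 0 (Ioc a b) := by
  refine Measure.eqOn_Ioc_of_ae_eq volume ?_ (hg.mono Ioc_subset_Icc_self) continuousOn_const
  refine (intervalIntegral.integral_eq_zero_iff_of_le_of_nonneg_ae hab ?_
    (hg.intervalIntegrable_of_Icc hab)).1 hg_int
  exact (ae_restrict_mem measurableSet_Ioc).mono fun u hu => hg_nonneg u (Ioc_subset_Icc_self hu)

def bump (u : ℝ) : ℝ := 6 * u * (1 - u)

theorem continuous_bump : Continuous bump := by
  unfold bump; fun_prop

theorem bump_nonneg {u : ℝ} (hu : u ∈ Icc 0 1) : 0 ≤ bump u :=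
  mul_nonneg (mul_nonneg (by norm_num) hu.1) (sub_nonneg.2 hu.2)

theorem bump_pos {u : ℝ} (hu : u ∈ Ioo 0 1) : 0 < bump u :=
  mul_pos (mul_pos (by norm_num) hu.1) (sub_pos.2 hu.2)

theorem integral_bump : ∫ u in (0:ℝ)..1, bump u = 1 := by
  have : bump = fun u => 6 * u - 6 * u ^ 2 := funext fun u => by unfold bump; ring
  rw [this, intervalIntegral.integral_sub (by apply Continuous.intervalIntegrable; fun_prop)
    (by apply Continuous.intervalIntegrable; fun_prop), intervalIntegral.integral_const_mul,
    intervalIntegral.integral_const_mul, integral_id, integral_pow]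
  norm_num

/-- The du Bois-Reymond lemma, with test functions vanishing at both ends. -/
theorem eqOn_const_of_forall_integral_mul_eq_zero {f : ℝ → ℝ} (hf : ContinuousOn f (Icc 0 1))
    (h : ∀ ρ : ℝ → ℝ, ContinuousOn ρ (Icc 0 1) → ρ 0 = 0 → ρ 1 = 0 →
      ∫ u in (0:ℝ)..1, ρ u = 0 → ∫ u in (0:ℝ)..1, ρ u * f u = 0) :
    EqOn f (fun _ => f 0) (Icc 0 1) := by
  have hbump : ContinuousOn bump (Icc 0 1) := continuous_bump.continuousOn
  have hint {g : ℝ → ℝ} (hg : ContinuousOn g (Icc 0 1)) : IntervalIntegrable g volume 0 1 :=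
    hg.intervalIntegrable_of_Icc zero_le_one
  -- `c` is the `bump`-weighted mean of `f`, so that `ρ` has mean zero.
  set c := ∫ u in (0:ℝ)..1, bump u * f u
  set ρ : ℝ → ℝ := fun u => bump u * (f u - c)
  have hρ : ContinuousOn ρ (Icc 0 1) := hbump.mul (hf.sub continuousOn_const)
  have hρ_int : ∫ u in (0:ℝ)..1, ρ u = 0 := by
    simp only [ρ, mul_sub]
    rw [intervalIntegral.integral_sub (f := fun u => bump u * f u) (hint (hbump.mul hf))
      ((hint hbump).mul_const c), intervalIntegral.integral_mul_const, integral_bump, one_mul,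
      sub_self]
  have hρf := h ρ hρ (by simp [ρ, bump]) (by simp [ρ, bump]) hρ_int
  have hsq_int : ∫ u in (0:ℝ)..1, bump u * (f u - c) ^ 2 = 0 := by
    have (u : ℝ) : bump u * (f u - c) ^ 2 = ρ u * f u - c * ρ u := by simp only [ρ]; ring
    simp only [this]
    rw [intervalIntegral.integral_sub (f := fun u => ρ u * f u) (hint (hρ.mul hf))
      ((hint hρ).const_mul c), intervalIntegral.integral_const_mul, hρf, hρ_int, mul_zero,
      sub_zero]
  have hsq_zero := eqOn_zero_of_integral_eq_zero_of_nonneg zero_le_one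
    (hbump.mul ((hf.sub continuousOn_const).pow 2))
    (fun u hu => mul_nonneg (bump_nonneg hu) (sq_nonneg _)) hsq_int
  have hfc : EqOn f (fun _ => c) (Icc 0 1) := by
    refine EqOn.of_subset_closure (s := Ioo 0 1) (fun u hu => ?_) hf continuousOn_const
      Ioo_subset_Icc_self (by rw [closure_Ioo zero_ne_one])
    simpa [(bump_pos hu).ne', sub_eq_zero] using hsq_zero (Ioo_subset_Ioc_self hu)
  intro u hu
  rw [hfc hu, hfc (left_mem_Icc.2 zero_le_one)]

theorem exists_eq_and_dualMap_eq_of_skew {K V : Type*} [Field K] [AddCommGroup V] [Module K V]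
    [Module.IsReflexive K V] (P : Module.Dual K V →ₗ[K] V)
    (hP : ∀ α β : Module.Dual K V, α (P β) = -β (P α))
    (T : V →ₗ[K] V) (v : V) (ψ : Module.Dual K V)
    (h : ∀ α x, T x = P α → α v + ψ x = 0) :
    ∃ β, P β = v ∧ T.dualMap β = ψ := by
  obtain ⟨β, hβ⟩ : (v, ψ) ∈ LinearMap.range (P.prod T.dualMap) := by
    rw [← Subspace.forall_mem_dualAnnihilator_apply_eq_zero_iff]
    intro f hf
    set α := f ∘ₗ LinearMap.inl K V (Module.Dual K V)
    set x := (Module.evalEquiv K V).symm (f ∘ₗ LinearMap.inr K V (Module.Dual K V))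
    have hf_apply : ∀ y γ, f (y, γ) = α y + γ x := fun y γ => by
      rw [Module.apply_evalEquiv_symm_apply, LinearMap.comp_apply, LinearMap.comp_apply,
        ← map_add, LinearMap.inl_apply, LinearMap.inr_apply, Prod.mk_add_mk, add_zero, zero_add]
    have hx : T x = P α := by
      rw [← sub_eq_zero, ← Module.forall_dual_apply_eq_zero_iff K]
      intro β
      have := (Submodule.mem_dualAnnihilator _).1 hf _ ⟨β, rfl⟩
      change f (P β, T.dualMap β) = 0 at this
      rw [hf_apply, LinearMap.dualMap_apply, hP] at this
      rw [map_sub]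
      linear_combination this
    rw [hf_apply]
    exact h α x hx
  exact ⟨β, congr_arg Prod.fst hβ, congr_arg Prod.snd hβ⟩

section Symplectic

variable {E : Type*} [NormedAddCommGroup E] [NormedSpace ℝ E]
  {π₀ : (E →L[ℝ] ℝ) →ₗ[ℝ] E}

variable (π₀) in
noncomputable def testPair (ρ : ℝ → ℝ) (hρ : ContinuousOn ρ (Icc 0 1)) (α : E →L[ℝ] ℝ) (x : E) :
    WPair E where
  lam u := x - (∫ s in (0:ℝ)..u, ρ s) • π₀ α
  phi u := ρ u • α
  lam_cont := continuousOn_const.sub <| ContinuousOn.smul (f := fun u => ∫ s in (0:ℝ)..u, ρ s)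
    (fun _ hu => (hasDerivWithinAt_integral_Icc hρ hu).continuousWithinAt) continuousOn_const
  phi_cont := hρ.smul continuousOn_const

theorem testPair_mem_VPer {Q : E ≃L[ℝ] E} {ρ : ℝ → ℝ} (hρ : ContinuousOn ρ (Icc 0 1))
    (hρ0 : ρ 0 = 0) (hρ1 : ρ 1 = 0) {α : E →L[ℝ] ℝ} {x : E}
    (hx : x - Q x = (∫ u in (0:ℝ)..1, ρ u) • π₀ α) :
    testPair π₀ ρ hρ α x ∈ VPer π₀ Q := by
  refine ⟨⟨?_, by simp [testPair, hρ0, hρ1]⟩, fun _ _ => ?_⟩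
  · simp only [testPair, intervalIntegral.integral_same, zero_smul, sub_zero, ← hx]
    abel
  · simp [testPair, intervalIntegral.integral_smul_const]

variable [FiniteDimensional ℝ E]

theorem WPair.hasDerivWithinAt_lam (a : WPair E)
    (ha : ∀ u ∈ Icc (0:ℝ) 1, a.lam u = a.lam 0 - π₀ (∫ s in (0:ℝ)..u, a.phi s))
    {u : ℝ} (hu : u ∈ Icc (0:ℝ) 1) :
    HasDerivWithinAt a.lam (-π₀ (a.phi u)) (Icc 0 1) u := by
  have := ((LinearMap.toContinuousLinearMap π₀).hasFDerivAt.comp_hasDerivWithinAt u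
    (hasDerivWithinAt_integral_Icc a.phi_cont hu)).const_sub (a.lam 0)
  exact this.congr (fun t ht => ha t ht) (ha u hu)

theorem Omega_eq_of_hasDerivWithinAt (hskew : ∀ α β : E →L[ℝ] ℝ, α (π₀ β) = -β (π₀ α))
    (a w : WPair E)
    (ha : ∀ u ∈ Icc (0:ℝ) 1, a.lam u = a.lam 0 - π₀ (∫ s in (0:ℝ)..u, a.phi s))
    {b b' : ℝ → E →L[ℝ] ℝ} (hb' : ContinuousOn b' (Icc 0 1))
    (hb : ∀ u ∈ Icc (0:ℝ) 1, HasDerivWithinAt b (b' u) (Icc 0 1) u)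
    (hphi : ∀ u ∈ Icc (0:ℝ) 1, w.phi u = -b' u) :
    Omega a w =
      b 1 (a.lam 1) - b 0 (a.lam 0) + ∫ u in (0:ℝ)..1, a.phi u (w.lam u - π₀ (b u)) := by
  have hb_cont : ContinuousOn b (Icc 0 1) := fun u hu => (hb u hu).continuousWithinAt
  have hπ₀ : Continuous π₀ := π₀.continuous_of_finiteDimensional
  set g' : ℝ → ℝ := fun u => b' u (a.lam u) + b u (-π₀ (a.phi u))
  have hg' : ContinuousOn g' (Icc 0 1) :=
    (hb'.clm_apply a.lam_cont).add (hb_cont.clm_apply (hπ₀.comp_continuousOn a.phi_cont).neg)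
  have hrest : ContinuousOn (fun u => a.phi u (w.lam u - π₀ (b u))) (Icc 0 1) :=
    a.phi_cont.clm_apply (w.lam_cont.sub (hπ₀.comp_continuousOn hb_cont))
  have hboundary : ∫ u in (0:ℝ)..1, g' u = b 1 (a.lam 1) - b 0 (a.lam 0) :=
    integral_eq_sub_of_hasDerivWithinAt_Icc zero_le_one
      (fun u hu => (hb u hu).clm_apply (a.hasDerivWithinAt_lam ha hu)) hg'
  rw [← hboundary, ← intervalIntegral.integral_add (hg'.intervalIntegrable_of_Icc zero_le_one)
    (hrest.intervalIntegrable_of_Icc zero_le_one)]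
  refine intervalIntegral.integral_congr fun u hu => ?_
  rw [uIcc_of_le zero_le_one] at hu
  simp only [g', hphi u hu, map_sub, map_neg, hskew (a.phi u) (b u), neg_apply]
  ring

theorem Omega_eq_zero_of_symmetry (hskew : ∀ α β : E →L[ℝ] ℝ, α (π₀ β) = -β (π₀ α))
    {Q : E ≃L[ℝ] E} {a w : WPair E} (ha : a ∈ VPer π₀ Q)
    {b b' : ℝ → E →L[ℝ] ℝ} (hb' : ContinuousOn b' (Icc 0 1))
    (hb : ∀ u ∈ Icc (0:ℝ) 1, HasDerivWithinAt b (b' u) (Icc 0 1) u)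
    (hbQ : b 0 = (b 1).comp (Q : E →L[ℝ] E))
    (hlam : ∀ u ∈ Icc (0:ℝ) 1, w.lam u = π₀ (b u))
    (hphi : ∀ u ∈ Icc (0:ℝ) 1, w.phi u = -b' u) :
    Omega a w = 0 := by
  obtain ⟨⟨ha1, -⟩, ha⟩ := ha
  rw [Omega_eq_of_hasDerivWithinAt hskew a w ha hb' hb hphi, ha1, hbQ,
    intervalIntegral.integral_congr (g := fun _ => 0) fun u hu => ?_]
  · simp
  · rw [uIcc_of_le zero_le_one] at hu
    simp [hlam u hu]

variable {Q : E ≃L[ℝ] E} {w : WPair E}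

theorem integral_mul_eq_of_mem_orth (hskew : ∀ α β : E →L[ℝ] ℝ, α (π₀ β) = -β (π₀ α))
    (horth : ∀ a ∈ VPer π₀ Q, Omega a w = 0) {ρ : ℝ → ℝ} (hρ : ContinuousOn ρ (Icc 0 1))
    (hρ0 : ρ 0 = 0) (hρ1 : ρ 1 = 0) {α : E →L[ℝ] ℝ} {x : E}
    (hx : x - Q x = (∫ u in (0:ℝ)..1, ρ u) • π₀ α) :
    ∫ u in (0:ℝ)..1, ρ u * α (w.lam u + π₀ (∫ s in (0:ℝ)..u, w.phi s)) =
      (∫ s in (0:ℝ)..1, w.phi s) (Q x) := by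
  have hv := testPair_mem_VPer hρ hρ0 hρ1 hx
  have := horth _ hv
  rw [Omega_eq_of_hasDerivWithinAt hskew _ w hv.2 w.phi_cont.neg
    (fun u hu => (hasDerivWithinAt_integral_Icc w.phi_cont hu).neg) (fun u _ => (neg_neg _).symm),
    hv.1.1] at this
  simp only [Pi.neg_apply, testPair, intervalIntegral.integral_same, zero_smul, sub_zero,
    neg_apply, neg_zero, zero_apply, map_neg, sub_neg_eq_add, smul_apply, smul_eq_mul] at this
  linarith

theorem lam_eq_of_mem_orth (hskew : ∀ α β : E →L[ℝ] ℝ, α (π₀ β) = -β (π₀ α))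
    (horth : ∀ a ∈ VPer π₀ Q, Omega a w = 0) :
    ∀ u ∈ Icc (0:ℝ) 1, w.lam u = w.lam 0 - π₀ (∫ s in (0:ℝ)..u, w.phi s) := by
  set μ : ℝ → E := fun u => w.lam u + π₀ (∫ s in (0:ℝ)..u, w.phi s)
  have hμ : ContinuousOn μ (Icc 0 1) := w.lam_cont.add
    (π₀.continuous_of_finiteDimensional.comp_continuousOn
      fun u hu => (hasDerivWithinAt_integral_Icc w.phi_cont hu).continuousWithinAt)
  have hαμ (α : E →L[ℝ] ℝ) : EqOn (fun u => α (μ u)) (fun _ => α (μ 0)) (Icc 0 1) :=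
    eqOn_const_of_forall_integral_mul_eq_zero (α.continuous.comp_continuousOn hμ)
      fun ρ hρ hρ0 hρ1 hρ_int => by
        simpa [μ] using integral_mul_eq_of_mem_orth hskew horth hρ hρ0 hρ1 (α := α) (x := 0)
          (by simp [hρ_int])
  intro u hu
  have : μ u = w.lam 0 := by simpa [μ] using SeparatingDual.eq_iff_forall_dual_eq.2 (hαμ · hu)
  rw [← this]
  simp [μ]

theorem apply_lam_zero_eq_of_mem_orth (hskew : ∀ α β : E →L[ℝ] ℝ, α (π₀ β) = -β (π₀ α))
    (horth : ∀ a ∈ VPer π₀ Q, Omega a w = 0) {α : E →L[ℝ] ℝ} {x : E} (hx : x - Q x = π₀ α) :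
    α (w.lam 0) = (∫ s in (0:ℝ)..1, w.phi s) (Q x) := by
  have hbump := continuous_bump.continuousOn (s := Icc 0 1)
  rw [← integral_mul_eq_of_mem_orth hskew horth hbump (by simp [bump]) (by simp [bump])
    (by rwa [integral_bump, one_smul])]
  rw [intervalIntegral.integral_congr (g := fun u => bump u * α (w.lam 0)) fun u hu => ?_,
    intervalIntegral.integral_mul_const, integral_bump, one_mul]
  rw [uIcc_of_le zero_le_one] at hu
  simp [lam_eq_of_mem_orth hskew horth u hu]

theorem exists_symmetry_of_mem_orth (hskew : ∀ α β : E →L[ℝ] ℝ, α (π₀ β) = -β (π₀ α))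
    (horth : ∀ a ∈ VPer π₀ Q, Omega a w = 0) :
    ∃ β : E →L[ℝ] ℝ, π₀ β = w.lam 0 ∧
      β = (β - ∫ s in (0:ℝ)..1, w.phi s).comp (Q : E →L[ℝ] E) := by
  set B := ∫ s in (0:ℝ)..1, w.phi s
  let toCLM := LinearMap.toContinuousLinearMap (𝕜 := ℝ) (E := E) (F' := ℝ)
  obtain ⟨β, hπβ, hβQ⟩ := exists_eq_and_dualMap_eq_of_skew (π₀ ∘ₗ toCLM.toLinearMap)
    (fun α β => hskew (toCLM α) (toCLM β)) (LinearMap.id - (Q : E →L[ℝ] E).toLinearMap)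
    (w.lam 0) (-(B.comp (Q : E →L[ℝ] E)).toLinearMap)
    fun α x hx => add_neg_eq_zero.2 (apply_lam_zero_eq_of_mem_orth hskew horth (α := toCLM α) hx)
  refine ⟨toCLM β, hπβ, ContinuousLinearMap.ext fun y => ?_⟩
  have h : β (y - Q y) = -B (Q y) := LinearMap.congr_fun hβQ y
  show β y = β (Q y) - B (Q y)
  rw [map_sub] at h
  linarith

end Symplectic

theorem orthWithin_VPer_eq_symmetries_general
    (E : Type*) [NormedAddCommGroup E] [NormedSpace ℝ E] [FiniteDimensional ℝ E]
    (π₀ : (E →L[ℝ] ℝ) →ₗ[ℝ] E)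
    (hskew : ∀ α β : E →L[ℝ] ℝ, α (π₀ β) = - β (π₀ α))
    (Q : E ≃L[ℝ] E) :
    orthWithin (WPer Q) (VPer π₀ Q) =
      {w ∈ WPer Q | ∃ b b' : ℝ → (E →L[ℝ] ℝ),
        ContinuousOn b' (Icc 0 1) ∧
        (∀ u ∈ Icc (0:ℝ) 1, HasDerivWithinAt b (b' u) (Icc 0 1) u) ∧
        b 0 = (b 1).comp (Q : E →L[ℝ] E) ∧
        (∀ u ∈ Icc (0:ℝ) 1, w.lam u = π₀ (b u)) ∧
        (∀ u ∈ Icc (0:ℝ) 1, w.phi u = - b' u)} := by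
  ext w
  constructor
  · rintro ⟨hw, horth⟩
    obtain ⟨β, hπβ, hβQ⟩ := exists_symmetry_of_mem_orth hskew horth
    refine ⟨hw, fun u => β - ∫ s in (0:ℝ)..u, w.phi s, fun u => -w.phi u, w.phi_cont.neg,
      fun u hu => (hasDerivWithinAt_integral_Icc w.phi_cont hu).const_sub β,
      by simpa using hβQ, fun u hu => ?_, fun u _ => (neg_neg _).symm⟩
    rw [lam_eq_of_mem_orth hskew horth u hu, map_sub, hπβ]
  · rintro ⟨hw, b, b', hb', hb, hbQ, hlam, hphi⟩
    exact ⟨hw, fun a ha => Omega_eq_zero_of_symmetry hskew ha hb' hb hbQ hlam hphi⟩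

theorem orthWithin_VPer_eq_symmetries
    (E : Type*) [NormedAddCommGroup E] [NormedSpace ℝ E] [FiniteDimensional ℝ E]
    (π₀ : (E →L[ℝ] ℝ) →ₗ[ℝ] E)
    (hskew : ∀ α β : E →L[ℝ] ℝ, α (π₀ β) = - β (π₀ α))
    (Q : E ≃L[ℝ] E)
    (hQ : ∀ α : E →L[ℝ] ℝ, Q (π₀ (α.comp (Q : E →L[ℝ] E))) = π₀ α) :
    orthWithin (WPer Q) (VPer π₀ Q) =
      {w ∈ WPer Q | ∃ b b' : ℝ → (E →L[ℝ] ℝ),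
        ContinuousOn b' (Icc 0 1) ∧
        (∀ u ∈ Icc (0:ℝ) 1, HasDerivWithinAt b (b' u) (Icc 0 1) u) ∧
        b 0 = (b 1).comp (Q : E →L[ℝ] E) ∧
        (∀ u ∈ Icc (0:ℝ) 1, w.lam u = π₀ (b u)) ∧
        (∀ u ∈ Icc (0:ℝ) 1, w.phi u = - b' u)} :=
  orthWithin_VPer_eq_symmetries_general E π₀ hskew Q
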